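/- arXiv:2403.12867 — 2 statements merged into one kernel-verified Lean document; each statement's English description precedes it below -/
import Mathlib

section
/- Let n ≥ 3 and -(n-2) ≤ q < 0. Suppose μ is a probability measure on a compact set K ⊂ ℝⁿ satisfying ∫_K |x|^{-(n-2)} dμ(x) ≤ R^{-(n-2)} for some R > 0. Then ∫_K |x|^q dμ(x) ≤ R^q. -/
open MeasureTheory Set

/-- If `n ≥ 3` and `-(n-2) ≤ q < 0`, `μ` a probability measure on compact
`K ⊂ ℝⁿ` with `∫ |x|^{-(n-2)} dμ ≤ R^{-(n-2)}` for some `R > 0`, then `∫ |x|^q dμ ≤ R^q`. -/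
theorem stmt3 (n : ℕ) (hn : 3 ≤ n) (q : ℝ) (hq1 : -((n : ℝ) - 2) ≤ q) (hq2 : q < 0)
    (K : Set (EuclideanSpace ℝ (Fin n))) (hK : IsCompact K)
    (μ : Measure (EuclideanSpace ℝ (Fin n))) [IsProbabilityMeasure μ] (hμK : μ K = 1)
    (R : ℝ) (hR : 0 < R)
    (hi1 : Integrable (fun x => ‖x‖ ^ (-((n : ℝ) - 2))) μ)
    (hi2 : Integrable (fun x => ‖x‖ ^ q) μ)
    (hpot : ∫ x, ‖x‖ ^ (-((n : ℝ) - 2)) ∂μ ≤ R ^ (-((n : ℝ) - 2))) :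
    ∫ x, ‖x‖ ^ q ∂μ ≤ R ^ q := by
  set p : ℝ := (n : ℝ) - 2 with hp
  have hn' : (3 : ℝ) ≤ (n : ℝ) := by exact_mod_cast hn
  have hp1 : (1 : ℝ) ≤ p := by simp only [hp]; linarith
  have hppos : 0 < p := by linarith
  set θ : ℝ := -q / p with hθ
  have hθpos : 0 < θ := by apply div_pos <;> linarith
  have hθ1 : θ ≤ 1 := by rw [hθ, div_le_one hppos]; linarith
  have hmul : -p * θ = q := by
    rw [hθ]; field_simp
  have hkey : ∀ s : ℝ, 0 ≤ s → (s ^ (-p)) ^ θ = s ^ q := by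
    intro s hs
    rw [← Real.rpow_mul hs, hmul]
  have hconc : ConcaveOn ℝ (Ici (0:ℝ)) (fun t : ℝ => t ^ θ) :=
    Real.concaveOn_rpow hθpos.le hθ1
  have hcont : ContinuousOn (fun t : ℝ => t ^ θ) (Ici (0:ℝ)) := fun t ht =>
    (Real.continuousAt_rpow_const t θ (Or.inr hθpos.le)).continuousWithinAt
  have hfs : ∀ᵐ x ∂μ, ‖x‖ ^ (-p) ∈ Ici (0:ℝ) :=
    Filter.Eventually.of_forall fun x => Real.rpow_nonneg (norm_nonneg x) _
  have hgi : Integrable ((fun t : ℝ => t ^ θ) ∘ fun x => ‖x‖ ^ (-p)) μ := by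
    apply hi2.congr
    filter_upwards with x
    exact (hkey ‖x‖ (norm_nonneg x)).symm
  have hjensen := hconc.le_map_integral hcont isClosed_Ici hfs hi1 hgi
  have heq : (∫ x, (fun t : ℝ => t ^ θ) (‖x‖ ^ (-p)) ∂μ) = ∫ x, ‖x‖ ^ q ∂μ := by
    apply integral_congr_ae
    filter_upwards with x
    exact hkey ‖x‖ (norm_nonneg x)
  rw [heq] at hjensen
  refine hjensen.trans ?_
  calc (∫ x, ‖x‖ ^ (-p) ∂μ) ^ θ
      ≤ (R ^ (-p)) ^ θ := by
        apply Real.rpow_le_rpow _ hpot hθpos.le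
        exact integral_nonneg fun x => Real.rpow_nonneg (norm_nonneg x) _
    _ = R ^ q := hkey R hR.le
end

section
/- Let n ≥ 2 and let μ be a probability measure on a compact set K ⊂ ℝⁿ ⊂ ℝ^{n+1} (embedded in the slice z = 0). For x = rζ with ζ ∈ 𝕊^{n-1}, define the potential u(rζ, z) = ∫_K (r² + z² + |y|² - 2r ζ·y)^{-(n-1)/2} dμ(y). Then there exist constants C, Z₀ > 0 such that for all z ≥ Z₀ and all r ≥ 0, | ∫_{𝕊^{n-1}} u(rζ, z) dζ - |𝕊^{n-1}| (r² + z²)^{-(n-1)/2} | ≤ C (r² + z²)^{-(n+1)/2}. -/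
/-!
Write `s = r² + z²` and `p = (n - 1)/2`. For `‖y‖ ≤ R` and `z ≥ 4R` the kernel
`s + ‖y‖² - 2r⟪ζ, y⟫` is `s (1 + t)` with `|t| ≤ 1/2`, so the second-order Taylor bound for
`(1 + t)^(-p)` gives `s^(-p) + 2pr s^(-(p+1)) ⟪ζ, y⟫ + O(R² s^(-(p+1)))`, uniformly in `r`.
Averaging over `μ` turns the linear term into `⟪ζ, ∫ y dμ⟫`, which is odd in `ζ` and so
integrates to zero over the sphere.
-/

open MeasureTheory Set Metric

lemma abs_one_add_rpow_neg_sub_one_le {a v : ℝ} (ha : 0 ≤ a) (hv : |v| ≤ 1 / 2) :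
    |(1 + v) ^ (-a) - 1| ≤ a * 2 ^ (a + 1) * |v| := by
  have half_le : ∀ u ∈ closedBall (0 : ℝ) (1 / 2), 1 / 2 ≤ 1 + u := fun u hu => by
    rw [mem_closedBall_zero_iff, Real.norm_eq_abs] at hu
    linarith [neg_abs_le u]
  have hderiv : ∀ u ∈ closedBall (0 : ℝ) (1 / 2), HasDerivWithinAt (fun u => (1 + u) ^ (-a))
      (-a * (1 + u) ^ (-a - 1)) (closedBall 0 (1 / 2)) u := fun u hu => by
    have h := ((hasDerivAt_id' u).const_add 1).rpow_const (p := -a)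
      (Or.inl (by linarith [half_le u hu]))
    simpa using h.hasDerivWithinAt
  have hbound : ∀ u ∈ closedBall (0 : ℝ) (1 / 2), ‖-a * (1 + u) ^ (-a - 1)‖ ≤ a * 2 ^ (a + 1) :=
    fun u hu => by
    have hu' := half_le u hu
    rw [norm_mul, norm_neg, Real.norm_of_nonneg ha,
      Real.norm_of_nonneg (Real.rpow_nonneg (by linarith) _)]
    gcongr
    calc (1 + u) ^ (-a - 1) ≤ (1 / 2) ^ (-a - 1) :=
          Real.rpow_le_rpow_of_nonpos (by norm_num) hu' (by linarith)
      _ = 2 ^ (a + 1) := by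
          rw [one_div, Real.inv_rpow zero_le_two, ← Real.rpow_neg zero_le_two]; ring_nf
  have := (convex_closedBall (0 : ℝ) (1 / 2)).norm_image_sub_le_of_norm_hasDerivWithin_le
    hderiv hbound (mem_closedBall_self (by norm_num)) (by simpa using hv)
  simpa using this

lemma abs_one_add_rpow_neg_sub_le {p t : ℝ} (hp : 0 ≤ p) (ht : |t| ≤ 1 / 2) :
    |(1 + t) ^ (-p) - 1 + p * t| ≤ p * (p + 1) * 2 ^ (p + 2) * t ^ 2 := by
  have hderiv : ∀ v ∈ closedBall (0 : ℝ) |t|, HasDerivWithinAt (fun v => (1 + v) ^ (-p) + p * v)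
      (-p * ((1 + v) ^ (-(p + 1)) - 1)) (closedBall 0 |t|) v := fun v hv => by
    rw [mem_closedBall_zero_iff, Real.norm_eq_abs] at hv
    have h := (((hasDerivAt_id' v).const_add 1).rpow_const (p := -p)
      (Or.inl (by linarith [neg_abs_le v]))).add ((hasDerivAt_id' v).const_mul p)
    exact (h.congr_deriv (by rw [neg_add']; ring)).hasDerivWithinAt
  have hbound : ∀ v ∈ closedBall (0 : ℝ) |t|,
      ‖-p * ((1 + v) ^ (-(p + 1)) - 1)‖ ≤ p * (p + 1) * 2 ^ (p + 2) * |t| := fun v hv => by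
    rw [mem_closedBall_zero_iff, Real.norm_eq_abs] at hv
    have h := abs_one_add_rpow_neg_sub_one_le (by linarith : 0 ≤ p + 1) (hv.trans ht)
    rw [norm_mul, norm_neg, Real.norm_of_nonneg hp, Real.norm_eq_abs]
    calc p * |(1 + v) ^ (-(p + 1)) - 1| ≤ p * ((p + 1) * 2 ^ (p + 1 + 1) * |v|) := by gcongr
      _ = p * (p + 1) * 2 ^ (p + 2) * |v| := by rw [show p + 1 + 1 = p + 2 by ring]; ring
      _ ≤ p * (p + 1) * 2 ^ (p + 2) * |t| := by gcongr
  have := (convex_closedBall (0 : ℝ) |t|).norm_image_sub_le_of_norm_hasDerivWithin_le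
    hderiv hbound (x := 0) (y := t) (mem_closedBall_self (abs_nonneg t)) (by simp)
  simp only [add_zero, mul_zero, Real.one_rpow, sub_zero, Real.norm_eq_abs] at this
  calc _ = |(1 + t) ^ (-p) + p * t - 1| := by ring_nf
    _ ≤ _ := this
    _ = _ := by rw [mul_assoc _ |t|, abs_mul_abs_self, sq]

lemma abs_rpow_neg_add_sub_le {p s d : ℝ} (hp : 0 ≤ p) (hs : 0 < s) (hd : 2 * |d| ≤ s) :
    |(s + d) ^ (-p) - s ^ (-p) + p * s ^ (-(p + 1)) * d|
      ≤ p * (p + 1) * 2 ^ (p + 2) * s ^ (-(p + 2)) * d ^ 2 := by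
  have ht : |d / s| ≤ 1 / 2 := by
    rw [abs_div, abs_of_pos hs, div_le_iff₀ hs]; linarith
  have h1t : 0 ≤ 1 + d / s := by linarith [neg_abs_le (d / s)]
  have hsd : (s + d) ^ (-p) = s ^ (-p) * (1 + d / s) ^ (-p) := by
    rw [← Real.mul_rpow hs.le h1t, mul_add, mul_div_cancel₀ _ hs.ne', mul_one]
  have hs1 : s ^ (-(p + 1)) = s ^ (-p) / s := by
    rw [neg_add', Real.rpow_sub_one hs.ne']
  have hs2 : s ^ (-(p + 2)) = s ^ (-p) / s ^ 2 := by
    rw [neg_add', Real.rpow_sub hs, Real.rpow_two]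
  have hsp : 0 ≤ s ^ (-p) := Real.rpow_nonneg hs.le _
  calc _ = |s ^ (-p) * ((1 + d / s) ^ (-p) - 1 + p * (d / s))| := by
        rw [hsd, hs1]; congr 1; field_simp
    _ ≤ s ^ (-p) * (p * (p + 1) * 2 ^ (p + 2) * (d / s) ^ 2) := by
        rw [abs_mul, abs_of_nonneg hsp]; gcongr; exact abs_one_add_rpow_neg_sub_le hp ht
    _ = _ := by rw [hs2]; field_simp

lemma abs_kernel_sub_linear_le {p R r z w i : ℝ} (hp : 0 ≤ p) (hr : 0 ≤ r) (hz : 0 < z)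
    (hzR : 4 * R ≤ z) (hi : |i| ≤ w) (hwR : w ≤ R) :
    |(r ^ 2 + z ^ 2 + w ^ 2 - 2 * r * i) ^ (-p) - (r ^ 2 + z ^ 2) ^ (-p)
        - 2 * p * r * (r ^ 2 + z ^ 2) ^ (-(p + 1)) * i|
      ≤ p * (9 * (p + 1) * 2 ^ (p + 2) + 1) * R ^ 2 * (r ^ 2 + z ^ 2) ^ (-(p + 1)) := by
  set s := r ^ 2 + z ^ 2
  set d := w ^ 2 - 2 * r * i
  have hs : 0 < s := by positivity
  obtain ⟨hiw, hwi⟩ := abs_le.1 hi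
  have hR : 0 ≤ R := by linarith [abs_nonneg i]
  have hd : |d| ≤ R ^ 2 + 2 * r * R := abs_le.2 ⟨by nlinarith, by nlinarith⟩
  have hds : 2 * |d| ≤ s := by nlinarith [sq_nonneg (r - 2 * R)]
  have hd2 : d ^ 2 ≤ 9 * R ^ 2 * s := by
    calc d ^ 2 = |d| ^ 2 := (sq_abs d).symm
      _ ≤ (R ^ 2 + 2 * r * R) ^ 2 := by gcongr
      _ = R ^ 2 * (R + 2 * r) ^ 2 := by ring
      _ ≤ R ^ 2 * (9 * s) := by gcongr; nlinarith [sq_nonneg (R - 2 * r)]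
      _ = 9 * R ^ 2 * s := by ring
  have hsp : s ^ (-(p + 2)) = s ^ (-(p + 1)) / s := by
    rw [← Real.rpow_sub_one hs.ne']; ring_nf
  have htaylor := abs_rpow_neg_add_sub_le hp hs hds
  calc _ = |((s + d) ^ (-p) - s ^ (-p) + p * s ^ (-(p + 1)) * d)
          - p * s ^ (-(p + 1)) * w ^ 2| := by
        congr 1; simp only [s, d]; ring_nf
    _ ≤ p * (p + 1) * 2 ^ (p + 2) * s ^ (-(p + 2)) * d ^ 2 + p * s ^ (-(p + 1)) * R ^ 2 := by
        refine (abs_sub _ _).trans (add_le_add htaylor ?_)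
        rw [abs_of_nonneg (by positivity)]
        gcongr
        nlinarith [abs_nonneg i]
    _ ≤ p * (p + 1) * 2 ^ (p + 2) * (s ^ (-(p + 1)) / s) * (9 * R ^ 2 * s)
          + p * s ^ (-(p + 1)) * R ^ 2 := by rw [hsp]; gcongr
    _ = _ := by field_simp

lemma abs_integral_sub_sub_le {α : Type*} [MeasurableSpace α] {ν : Measure α} [IsFiniteMeasure ν]
    {Φ Λ : α → ℝ} {c ε : ℝ} (hΦ : AEStronglyMeasurable Φ ν) (hΛ : Integrable Λ ν)
    (h : ∀ᵐ x ∂ν, |Φ x - c - Λ x| ≤ ε) :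
    |∫ x, Φ x ∂ν - ν.real univ * c - ∫ x, Λ x ∂ν| ≤ ν.real univ * ε := by
  have hrem : Integrable (fun x => Φ x - c - Λ x) ν :=
    .of_bound ((hΦ.sub aestronglyMeasurable_const).sub hΛ.1) ε h
  have hΦi : Integrable Φ ν := ((hrem.add (integrable_const c)).add hΛ).congr
    (.of_forall fun x => show Φ x - c - Λ x + c + Λ x = Φ x by ring)
  have hsplit : ∫ x, (Φ x - c - Λ x) ∂ν = ∫ x, Φ x ∂ν - ν.real univ * c - ∫ x, Λ x ∂ν := by
    rw [integral_sub ?_ hΛ, integral_sub hΦi (integrable_const c), integral_const, smul_eq_mul]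
    exact hΦi.sub (integrable_const c)
  rw [← hsplit, mul_comm]
  exact norm_integral_le_of_norm_le_const (f := fun x => Φ x - c - Λ x) h

lemma integral_eq_zero_of_measure_univ_eq_top {α : Type*} [MeasurableSpace α] {ν : Measure α}
    (hν : ν univ = ⊤) {f : α → ℝ} {δ : ℝ} (hδ : 0 < δ) (hf : ∀ᵐ x ∂ν, δ ≤ f x) :
    ∫ x, f x ∂ν = 0 := by
  refine integral_undef fun hfi => (hfi.measure_ge_lt_top hδ).ne ?_
  rw [measure_congr (Filter.eventuallyEq_univ.2 hf), hν]

lemma integral_eq_zero_of_odd {G : Type*} [AddGroup G] [MeasurableSpace G] [MeasurableNeg G]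
    {ν : Measure G} [ν.IsNegInvariant] {g : G → ℝ} (hg : ∀ x, g (-x) = -g x) :
    ∫ x, g x ∂ν = 0 := by
  have h := integral_neg_eq_self g ν
  simp only [hg, integral_neg] at h
  linarith

instance isNegInvariant_restrict_sphere {E : Type*} [NormedAddCommGroup E] [MeasurableSpace E]
    [BorelSpace E] (d r : ℝ) : (μH[d].restrict (sphere (0 : E) r)).IsNegInvariant where
  neg_eq_self := by
    have hS : Neg.neg ⁻¹' sphere (0 : E) r = sphere 0 r := by ext; simp
    calc Measure.map Neg.neg (μH[d].restrict (sphere (0 : E) r))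
        = Measure.map Neg.neg (μH[d].restrict (Neg.neg ⁻¹' sphere (0 : E) r)) := by rw [hS]
      _ = (Measure.map Neg.neg μH[d]).restrict (sphere 0 r) :=
        (Measure.restrict_map measurable_neg isClosed_sphere.measurableSet).symm
      _ = μH[d].restrict (sphere 0 r) := by
        rw [show Measure.map Neg.neg μH[d] = (μH[d] : Measure E) from
          (IsometryEquiv.neg E).map_hausdorffMeasure d]

section Potential

variable {E : Type*} [NormedAddCommGroup E] [InnerProductSpace ℝ E]

lemma sq_le_kernel {r : ℝ} (z : ℝ) {ζ y : E} (hr : 0 ≤ r) (hζ : ‖ζ‖ = 1) :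
    z ^ 2 ≤ r ^ 2 + z ^ 2 + ‖y‖ ^ 2 - 2 * r * inner ℝ ζ y := by
  have h := real_inner_le_norm ζ y
  rw [hζ, one_mul] at h
  nlinarith [sq_nonneg (r - ‖y‖)]

lemma kernel_le {r : ℝ} (z : ℝ) {ζ y : E} (hr : 0 ≤ r) (hζ : ‖ζ‖ = 1) :
    r ^ 2 + z ^ 2 + ‖y‖ ^ 2 - 2 * r * inner ℝ ζ y ≤ (r + ‖y‖) ^ 2 + z ^ 2 := by
  have h := neg_le_of_abs_le (abs_real_inner_le_norm ζ y)
  rw [hζ, one_mul] at h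
  nlinarith

variable [MeasurableSpace E] [BorelSpace E]

lemma rpow_le_integral_kernel {μ : Measure E} [IsProbabilityMeasure μ] {R p r z : ℝ} {ζ : E}
    (hμ : ∀ᵐ y ∂μ, ‖y‖ ≤ R) (hζ : ‖ζ‖ = 1) (hp : 0 ≤ p) (hr : 0 ≤ r) (hz : 0 < z) :
    ((r + R) ^ 2 + z ^ 2) ^ (-p)
      ≤ ∫ y, (r ^ 2 + z ^ 2 + ‖y‖ ^ 2 - 2 * r * inner ℝ ζ y) ^ (-p) ∂μ := by
  have hpos : ∀ y : E, 0 < r ^ 2 + z ^ 2 + ‖y‖ ^ 2 - 2 * r * inner ℝ ζ y := fun y =>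
    (pow_pos hz 2).trans_le (sq_le_kernel z hr hζ)
  have hint : Integrable (fun y => (r ^ 2 + z ^ 2 + ‖y‖ ^ 2 - 2 * r * inner ℝ ζ y) ^ (-p)) μ := by
    refine .of_bound (Measurable.aestronglyMeasurable (by fun_prop)) ((z ^ 2) ^ (-p))
      (.of_forall fun y => ?_)
    rw [Real.norm_of_nonneg (Real.rpow_nonneg (hpos y).le _)]
    exact Real.rpow_le_rpow_of_nonpos (by positivity) (sq_le_kernel z hr hζ) (by linarith)
  calc ((r + R) ^ 2 + z ^ 2) ^ (-p) = ∫ _, ((r + R) ^ 2 + z ^ 2) ^ (-p) ∂μ := by simp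
    _ ≤ _ := by
      refine integral_mono_ae (integrable_const _) hint (hμ.mono fun y hy => ?_)
      refine Real.rpow_le_rpow_of_nonpos (hpos y) ((kernel_le z hr hζ).trans ?_) (by linarith)
      have := norm_nonneg y
      gcongr

variable [CompleteSpace E] [SecondCountableTopology E]

theorem abs_integral_potential_sub_le {μ ν : Measure E} [IsProbabilityMeasure μ]
    [ν.IsNegInvariant] (hν : ∀ᵐ ζ ∂ν, ‖ζ‖ = 1) {R p r z : ℝ} (hμ : ∀ᵐ y ∂μ, ‖y‖ ≤ R)
    (hp : 0 ≤ p) (hr : 0 ≤ r) (hz : 0 < z) (hzR : 4 * R ≤ z) :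
    |∫ ζ, ∫ y, (r ^ 2 + z ^ 2 + ‖y‖ ^ 2 - 2 * r * inner ℝ ζ y) ^ (-p) ∂μ ∂ν
        - ν.real univ * (r ^ 2 + z ^ 2) ^ (-p)|
      ≤ ν.real univ
          * (p * (9 * (p + 1) * 2 ^ (p + 2) + 1) * R ^ 2 * (r ^ 2 + z ^ 2) ^ (-(p + 1))) := by
  set k := 2 * p * r * (r ^ 2 + z ^ 2) ^ (-(p + 1))
  set ybar := ∫ y, y ∂μ
  have hF : Measurable fun w : E × E =>
      (r ^ 2 + z ^ 2 + ‖w.2‖ ^ 2 - 2 * r * inner ℝ w.1 w.2) ^ (-p) := by fun_prop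
  have hid : Integrable (fun y => y) μ := .of_bound aestronglyMeasurable_id R hμ
  have hinner : ∀ᵐ ζ ∂ν,
      |∫ y, (r ^ 2 + z ^ 2 + ‖y‖ ^ 2 - 2 * r * inner ℝ ζ y) ^ (-p) ∂μ
        - (r ^ 2 + z ^ 2) ^ (-p) - k * inner ℝ ζ ybar|
      ≤ p * (9 * (p + 1) * 2 ^ (p + 2) + 1) * R ^ 2 * (r ^ 2 + z ^ 2) ^ (-(p + 1)) := by
    filter_upwards [hν] with ζ hζ
    have h := abs_integral_sub_sub_le (hF.comp measurable_prodMk_left).aestronglyMeasurable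
      ((hid.const_inner ζ).const_mul k) (hμ.mono fun y hy => abs_kernel_sub_linear_le hp hr hz hzR
        (by simpa [hζ] using abs_real_inner_le_norm ζ y) hy)
    rwa [probReal_univ, one_mul, one_mul, integral_const_mul, integral_inner hid] at h
  by_cases hfin : ν univ = ⊤
  -- then `ν.real univ = 0`, and the outer integral is `0` because its positive integrand
  -- cannot be integrable
  · have hlow : ∀ᵐ ζ ∂ν, ((r + R) ^ 2 + z ^ 2) ^ (-p)
        ≤ ∫ y, (r ^ 2 + z ^ 2 + ‖y‖ ^ 2 - 2 * r * inner ℝ ζ y) ^ (-p) ∂μ :=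
      hν.mono fun ζ hζ => rpow_le_integral_kernel hμ hζ hp hr hz
    rw [integral_eq_zero_of_measure_univ_eq_top hfin (by positivity) hlow, measureReal_def, hfin]
    simp
  · have : IsFiniteMeasure ν := ⟨lt_top_iff_ne_top.2 hfin⟩
    have hlin : Integrable (fun ζ => k * inner ℝ ζ ybar) ν :=
      .of_bound (by fun_prop) (|k| * ‖ybar‖) (hν.mono fun ζ hζ => by
        simpa [abs_mul, hζ] using
          mul_le_mul_of_nonneg_left (abs_real_inner_le_norm ζ ybar) (abs_nonneg k))
    have h := abs_integral_sub_sub_le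
      hF.stronglyMeasurable.integral_prod_right'.aestronglyMeasurable hlin hinner
    rwa [integral_eq_zero_of_odd (g := fun ζ => k * inner ℝ ζ ybar)
      (fun ζ => by simp [inner_neg_left]), sub_zero] at h

end Potential

/-- uniform asymptotic expansion of the spherical mean of the potential:
there are `C, Z₀ > 0` such that for all `z ≥ Z₀` and `r ≥ 0`,
`|∫_{𝕊^{n-1}} u(rζ,z) dζ - |𝕊^{n-1}|(r²+z²)^{-(n-1)/2}| ≤ C (r²+z²)^{-(n+1)/2}`,
where `u(rζ,z) = ∫_K (r²+z²+|y|²-2rζ·y)^{-(n-1)/2} dμ(y)`. -/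
theorem stmt10 (n : ℕ) (hn : 2 ≤ n)
    (K : Set (EuclideanSpace ℝ (Fin n))) (hK : IsCompact K)
    (μ : Measure (EuclideanSpace ℝ (Fin n))) [IsProbabilityMeasure μ] (hμK : μ K = 1) :
    ∃ C Z₀ : ℝ, 0 < C ∧ 0 < Z₀ ∧ ∀ z : ℝ, Z₀ ≤ z → ∀ r : ℝ, 0 ≤ r →
      |(∫ ζ in Metric.sphere (0 : EuclideanSpace ℝ (Fin n)) 1,
            (∫ y, (r ^ 2 + z ^ 2 + ‖y‖ ^ 2 - 2 * r * (inner ℝ ζ y : ℝ)) ^ (-((n : ℝ) - 1) / 2) ∂μ)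
            ∂(μH[(n : ℝ) - 1]))
          - (μH[(n : ℝ) - 1] (Metric.sphere (0 : EuclideanSpace ℝ (Fin n)) 1)).toReal *
              (r ^ 2 + z ^ 2) ^ (-((n : ℝ) - 1) / 2)|
        ≤ C * (r ^ 2 + z ^ 2) ^ (-((n : ℝ) + 1) / 2) := by
  obtain ⟨R, hR, hKR⟩ := hK.isBounded.subset_closedBall_lt 0 0
  have hμR : ∀ᵐ y ∂μ, ‖y‖ ≤ R :=
    (ae_iff.2 ((prob_compl_eq_zero_iff hK.isClosed.measurableSet).2 hμK)).mono fun y hy =>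
      mem_closedBall_zero_iff.1 (hKR hy)
  set ν := μH[(n : ℝ) - 1].restrict (sphere (0 : EuclideanSpace ℝ (Fin n)) 1)
  have hν : ∀ᵐ ζ ∂ν, ‖ζ‖ = 1 :=
    (ae_restrict_mem isClosed_sphere.measurableSet).mono fun _ hζ => mem_sphere_zero_iff_norm.1 hζ
  set p := ((n : ℝ) - 1) / 2
  have hp : 0 ≤ p := by
    have : (2 : ℝ) ≤ n := by exact_mod_cast hn
    exact div_nonneg (by linarith) zero_le_two
  set C := p * (9 * (p + 1) * 2 ^ (p + 2) + 1) * R ^ 2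
  refine ⟨ν.real univ * C + 1, 4 * R, by positivity, by positivity, fun z hz r hr => ?_⟩
  have hsphere : (μH[(n : ℝ) - 1] (sphere (0 : EuclideanSpace ℝ (Fin n)) 1)).toReal
      = ν.real univ := by simp [ν, measureReal_def]
  rw [hsphere, show -((n : ℝ) - 1) / 2 = -p by ring, show -((n : ℝ) + 1) / 2 = -(p + 1) by ring]
  calc _ ≤ ν.real univ * (C * (r ^ 2 + z ^ 2) ^ (-(p + 1))) :=
        abs_integral_potential_sub_le hν hμR hp hr (by linarith) hz
    _ ≤ _ := by rw [← mul_assoc]; gcongr; linarith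
end
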